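/- arXiv:2107.05442 — 10 statements merged into one kernel-verified Lean document; each statement's English description precedes it below -/
import Mathlib

section
/- Let {x_k} be a sequence in X that is total over X_F^*. Then the set X_{d₁}^* = { {T(x_k,a₂,…,aₙ)}ₖ : T ∈ X_F^* } is a linear subspace of 𝕂^ℕ, the assignment ‖{T(x_k,a₂,…,aₙ)}ₖ‖ := ‖T‖ (T ∈ X_F^*) is a well-defined norm on X_{d₁}^*, and X_{d₁}^* is a Banach space with respect to this norm. -/
open Filter Finset

/-- The axioms of an `(n+1)`-norm (Gahler / Gunawan-Mashadi) on a vector space `X` over `𝕂`: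
it vanishes exactly on linearly dependent tuples, is invariant under permutations, and is
absolutely homogeneous and subadditive in the first variable (hence, by permutation
invariance, in each variable). -/
structure IsNNorm (𝕂 : Type*) {X : Type*} {n : ℕ} [RCLike 𝕂] [AddCommGroup X] [Module 𝕂 X]
    (N : (Fin (n + 1) → X) → ℝ) : Prop where
  eq_zero_iff : ∀ v : Fin (n + 1) → X, N v = 0 ↔ ¬ LinearIndependent 𝕂 v
  perm_invariant : ∀ (v : Fin (n + 1) → X) (σ : Equiv.Perm (Fin (n + 1))), N (v ∘ σ) = N v
  smul_left : ∀ (c : 𝕂) (z : X) (w : Fin n → X),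
    N (Fin.cons (c • z) w) = ‖c‖ * N (Fin.cons z w)
  add_left : ∀ (z z' : X) (w : Fin n → X),
    N (Fin.cons (z + z') w) ≤ N (Fin.cons z w) + N (Fin.cons z' w)

/-- `X` is an `n`-Banach space with respect to the `(n+1)`-norm `N`: every sequence that is
Cauchy with respect to the `n`-norm converges. -/
def IsNBanach {X : Type*} {n : ℕ} [AddCommGroup X] (N : (Fin (n + 1) → X) → ℝ) : Prop :=
  ∀ x : ℕ → X,
    (∀ e : Fin n → X,
      Tendsto (fun p : ℕ × ℕ => N (Fin.cons (x p.1 - x p.2) e)) atTop (nhds 0)) →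
    ∃ y : X, ∀ e : Fin n → X,
      Tendsto (fun k => N (Fin.cons (x k - y) e)) atTop (nhds 0)

/-- `(x, S)` is a retro Banach frame associated to `(a₂, …, aₙ)` for `X_F^* = X →L[𝕂] 𝕂`
(the space of bounded `b`-linear functionals, encoded via the seminorm
`‖z‖ = ‖z, a₂, …, aₙ‖` on `X`) with respect to the Banach space of scalar sequences `D`
(realized as a subspace of `𝕂^ℕ` via an injective linear inclusion `j`), with
frame bounds `0 < A ≤ B`. -/
def RetroBanachFrame {𝕂 X D : Type*} [RCLike 𝕂] [SeminormedAddCommGroup X]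
    [NormedSpace 𝕂 X] [NormedAddCommGroup D] [NormedSpace 𝕂 D]
    (j : D →ₗ[𝕂] (ℕ → 𝕂)) (x : ℕ → X) (S : D →L[𝕂] (X →L[𝕂] 𝕂)) (A B : ℝ) : Prop :=
  0 < A ∧ A ≤ B ∧
    ∀ T : X →L[𝕂] 𝕂, ∃ c : D, j c = (fun k => T (x k)) ∧
      A * ‖T‖ ≤ ‖c‖ ∧ ‖c‖ ≤ B * ‖T‖ ∧ S c = T

/-- `{x_k}` is a retro Banach Bessel sequence associated to `(a₂, …, aₙ)` for
`X_F^* = X →L[𝕂] 𝕂` with respect to `D`, with Bessel bound `K`. -/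
def RetroBesselSeq {𝕂 X D : Type*} [RCLike 𝕂] [SeminormedAddCommGroup X]
    [NormedSpace 𝕂 X] [NormedAddCommGroup D] [NormedSpace 𝕂 D]
    (j : D →ₗ[𝕂] (ℕ → 𝕂)) (x : ℕ → X) (K : ℝ) : Prop :=
  0 < K ∧ ∀ T : X →L[𝕂] 𝕂, ∃ c : D, j c = (fun k => T (x k)) ∧ ‖c‖ ≤ K * ‖T‖

/-- `{x_k}` is total over `X_F^* = X →L[𝕂] 𝕂`. -/
def TotalOver (𝕂 : Type*) {X : Type*} [RCLike 𝕂] [SeminormedAddCommGroup X]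
    [NormedSpace 𝕂 X] (x : ℕ → X) : Prop :=
  ∀ T : X →L[𝕂] 𝕂, (∀ k, T (x k) = 0) → T = 0

/-- A sequence of reals is positively confined if `0 < inf α_k` and `sup α_k < ∞`. -/
def PositivelyConfined (α : ℕ → ℝ) : Prop :=
  0 < ⨅ k, α k ∧ BddAbove (Set.range α)

/-- The norm of the sequence space `D` (included in `𝕂^ℕ` via `j`) is solid. -/
def SolidNorm {𝕂 D : Type*} [RCLike 𝕂] [NormedAddCommGroup D] [NormedSpace 𝕂 D]
    (j : D →ₗ[𝕂] (ℕ → 𝕂)) : Prop :=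
  ∀ (γ : ℕ → 𝕂) (c : D), 0 < ⨅ k, ‖γ k‖ → BddAbove (Set.range fun k => ‖γ k‖) →
    ∃ d : D, j d = (fun k => γ k * j c k) ∧
      (⨅ k, ‖γ k‖) * ‖c‖ ≤ ‖d‖ ∧ ‖d‖ ≤ (⨆ k, ‖γ k‖) * ‖c‖

/- The coefficient map `T ↦ (T x_k)_k` is linear, and totality of `{x_k}` is exactly its
injectivity. Hence it is a linear isomorphism from `X_F^*` onto its range `X_{d₁}^*`, and the norm
`‖T‖` transported along this isomorphism inherits the norm axioms and the completeness of the
dual space `X_F^*`. -/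

section CoeffMap

variable (𝕂 : Type*) {X : Type*} [RCLike 𝕂] [SeminormedAddCommGroup X] [NormedSpace 𝕂 X]

noncomputable def coeffMap (x : ℕ → X) : (X →L[𝕂] 𝕂) →ₗ[𝕂] (ℕ → 𝕂) :=
  LinearMap.pi fun k => (ContinuousLinearMap.apply 𝕂 𝕂 (x k)).toLinearMap

variable {𝕂}

theorem TotalOver.coeffMap_injective {x : ℕ → X} (htotal : TotalOver 𝕂 x) :
    Function.Injective (coeffMap 𝕂 x) :=
  (injective_iff_map_eq_zero _).mpr fun T hT => htotal T fun k => congrFun hT k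

end CoeffMap

theorem ContinuousLinearMap.opNorm_eq_zero_iff_of_seminormed {𝕜 E F : Type*}
    [NontriviallyNormedField 𝕜] [SeminormedAddCommGroup E] [NormedAddCommGroup F]
    [NormedSpace 𝕜 E] [NormedSpace 𝕜 F] (f : E →L[𝕜] F) : ‖f‖ = 0 ↔ f = 0 := by
  refine ⟨fun hf => ext fun z => norm_le_zero_iff.mp ?_, fun hf => hf ▸ opNorm_zero⟩
  simpa [hf] using f.le_opNorm z

theorem AddEquiv.exists_tendsto_norm_sub_of_cauchy {W E : Type*} [AddCommGroup W]
    [SeminormedAddCommGroup E] [CompleteSpace E] (e : W ≃+ E) (u : ℕ → W)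
    (hu : ∀ ε : ℝ, 0 < ε → ∃ n₀ : ℕ, ∀ p q : ℕ, n₀ ≤ p → n₀ ≤ q → ‖e (u p - u q)‖ < ε) :
    ∃ c : W, Tendsto (fun k => ‖e (u k - c)‖) atTop (nhds 0) := by
  have hcauchy : CauchySeq (e ∘ u) := by
    refine Metric.cauchySeq_iff.mpr fun ε hε => ?_
    obtain ⟨n₀, hn₀⟩ := hu ε hε
    exact ⟨n₀, fun p hp q hq => by simpa [dist_eq_norm] using hn₀ p q hp hq⟩
  obtain ⟨y, hy⟩ := cauchySeq_tendsto_of_complete hcauchy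
  refine ⟨e.symm y, ?_⟩
  simpa using tendsto_iff_norm_sub_tendsto_zero.mp hy

theorem statement2_general
    {𝕂 : Type*} [RCLike 𝕂] {X : Type*} [SeminormedAddCommGroup X] [NormedSpace 𝕂 X]
    (x : ℕ → X) (htotal : TotalOver 𝕂 x) :
    ∃ (W : Submodule 𝕂 (ℕ → 𝕂)) (nw : W → ℝ),
      (W : Set (ℕ → 𝕂)) = Set.range (fun T : X →L[𝕂] 𝕂 => fun k => T (x k)) ∧
      (∀ T : X →L[𝕂] 𝕂, (fun k => T (x k)) ∈ W) ∧
      (∀ (T : X →L[𝕂] 𝕂) (h : (fun k => T (x k)) ∈ W), nw ⟨fun k => T (x k), h⟩ = ‖T‖) ∧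
      (∀ c : W, 0 ≤ nw c) ∧
      (∀ c : W, nw c = 0 ↔ c = 0) ∧
      (∀ c d : W, nw (c + d) ≤ nw c + nw d) ∧
      (∀ (γ : 𝕂) (c : W), nw (γ • c) = ‖γ‖ * nw c) ∧
      (∀ u : ℕ → W,
        (∀ ε : ℝ, 0 < ε → ∃ n₀ : ℕ, ∀ p q : ℕ, n₀ ≤ p → n₀ ≤ q → nw (u p - u q) < ε) →
        ∃ c : W, Tendsto (fun k => nw (u k - c)) atTop (nhds 0)) := by
  let e := (LinearEquiv.ofInjective (coeffMap 𝕂 x) htotal.coeffMap_injective).symm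
  refine ⟨LinearMap.range (coeffMap 𝕂 x), fun c => ‖e c‖, ?_⟩
  beta_reduce
  refine ⟨LinearMap.coe_range _, LinearMap.mem_range_self _, fun T h => ?_,
    fun c => norm_nonneg _, fun c => ?_, fun c d => ?_, fun γ c => ?_, ?_⟩
  · rw [show e ⟨_, h⟩ = T from (LinearEquiv.ofInjective _ _).symm_apply_eq.mpr rfl]
  · rw [ContinuousLinearMap.opNorm_eq_zero_iff_of_seminormed, e.map_eq_zero_iff]
  · simpa only [map_add] using norm_add_le (e c) (e d)
  · rw [map_smul, norm_smul]
  · exact e.toAddEquiv.exists_tendsto_norm_sub_of_cauchy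

theorem statement2
    {𝕂 : Type*} [RCLike 𝕂] {X : Type*} [SeminormedAddCommGroup X] [NormedSpace 𝕂 X]
    {n : ℕ} (hn : 1 ≤ n) {N : (Fin (n + 1) → X) → ℝ} (hN : IsNNorm 𝕂 N)
    (hXBanach : IsNBanach N) {a : Fin n → X} (ha : ∀ z : X, ‖z‖ = N (Fin.cons z a))
    (x : ℕ → X) (htotal : TotalOver 𝕂 x) :
    ∃ (W : Submodule 𝕂 (ℕ → 𝕂)) (nw : W → ℝ),
      (W : Set (ℕ → 𝕂)) = Set.range (fun T : X →L[𝕂] 𝕂 => fun k => T (x k)) ∧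
      (∀ T : X →L[𝕂] 𝕂, (fun k => T (x k)) ∈ W) ∧
      (∀ (T : X →L[𝕂] 𝕂) (h : (fun k => T (x k)) ∈ W), nw ⟨fun k => T (x k), h⟩ = ‖T‖) ∧
      (∀ c : W, 0 ≤ nw c) ∧
      (∀ c : W, nw c = 0 ↔ c = 0) ∧
      (∀ c d : W, nw (c + d) ≤ nw c + nw d) ∧
      (∀ (γ : 𝕂) (c : W), nw (γ • c) = ‖γ‖ * nw c) ∧
      (∀ u : ℕ → W,
        (∀ ε : ℝ, 0 < ε → ∃ n₀ : ℕ, ∀ p q : ℕ, n₀ ≤ p → n₀ ≤ q → nw (u p - u q) < ε) →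
        ∃ c : W, Tendsto (fun k => nw (u k - c)) atTop (nhds 0)) :=
  statement2_general x htotal
end

section
/- Suppose there exist a Banach space of scalar sequences X_d^*, a sequence {x_k} in X, and an operator S such that ({x_k}, S) is a retro Banach frame associated to (a₂,…,aₙ) for X_F^* with respect to X_d^*. Then there exist a Banach space of scalar sequences X_{d₁}^* — namely X_{d₁}^* = { {T(x_k,a₂,…,aₙ)}ₖ : T ∈ X_F^* } with the norm ‖{T(x_k,a₂,…,aₙ)}ₖ‖ := ‖T‖ — and a bounded linear operator P : X_{d₁}^* → X_F^* such that ({x_k}, P) is a normalized tight retro Banach frame associated to (a₂,…,aₙ) for X_F^* with respect to X_{d₁}^*. -/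
open Filter Finset

set_option maxHeartbeats 1000000 in
theorem statement3
    {𝕂 : Type*} [RCLike 𝕂] {X : Type*} [SeminormedAddCommGroup X] [NormedSpace 𝕂 X]
    {n : ℕ} (hn : 1 ≤ n) {N : (Fin (n + 1) → X) → ℝ} (hN : IsNNorm 𝕂 N)
    (hXBanach : IsNBanach N) {a : Fin n → X} (ha : ∀ z : X, ‖z‖ = N (Fin.cons z a))
    {D : Type*} [NormedAddCommGroup D] [NormedSpace 𝕂 D] [CompleteSpace D]
    (j : D →ₗ[𝕂] (ℕ → 𝕂)) (hj : Function.Injective j)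
    (x : ℕ → X) (S : D →L[𝕂] (X →L[𝕂] 𝕂)) (A B : ℝ)
    (hframe : RetroBanachFrame j x S A B) :
    ∃ (W : Submodule 𝕂 (ℕ → 𝕂)) (nw : W → ℝ) (P : W →ₗ[𝕂] (X →L[𝕂] 𝕂)),
      (W : Set (ℕ → 𝕂)) = Set.range (fun T : X →L[𝕂] 𝕂 => fun k => T (x k)) ∧
      (∀ T : X →L[𝕂] 𝕂, (fun k => T (x k)) ∈ W) ∧
      (∀ (T : X →L[𝕂] 𝕂) (h : (fun k => T (x k)) ∈ W), nw ⟨fun k => T (x k), h⟩ = ‖T‖) ∧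
      (∀ c : W, 0 ≤ nw c) ∧
      (∀ c : W, nw c = 0 ↔ c = 0) ∧
      (∀ c d : W, nw (c + d) ≤ nw c + nw d) ∧
      (∀ (γ : 𝕂) (c : W), nw (γ • c) = ‖γ‖ * nw c) ∧
      (∀ u : ℕ → W,
        (∀ ε : ℝ, 0 < ε → ∃ n₀ : ℕ, ∀ p q : ℕ, n₀ ≤ p → n₀ ≤ q → nw (u p - u q) < ε) →
        ∃ c : W, Tendsto (fun k => nw (u k - c)) atTop (nhds 0)) ∧
      (∃ Cb : ℝ, 0 ≤ Cb ∧ ∀ c : W, ‖P c‖ ≤ Cb * nw c) ∧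
      (∀ (T : X →L[𝕂] 𝕂) (h : (fun k => T (x k)) ∈ W), P ⟨fun k => T (x k), h⟩ = T) := by
  obtain ⟨hA, hAB, hfr⟩ := hframe
  have hnz : ∀ T : X →L[𝕂] 𝕂, ‖T‖ = 0 → T = 0 := by
    intro T hT
    ext y
    have h1 := T.le_opNorm y
    rw [hT, zero_mul] at h1
    simpa using le_antisymm h1 (norm_nonneg _)
  set Φ : (X →L[𝕂] 𝕂) →ₗ[𝕂] (ℕ → 𝕂) :=
    { toFun := fun T => fun k => T (x k)
      map_add' := fun _ _ => rfl
      map_smul' := fun _ _ => rfl } with hΦ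
  have hker : ∀ T : X →L[𝕂] 𝕂, Φ T = 0 → T = 0 := by
    intro T hT
    obtain ⟨c, hc, hc1, _, _⟩ := hfr T
    have hc0 : c = 0 := hj (by rw [hc, map_zero]; exact hT)
    refine hnz T (le_antisymm ?_ (norm_nonneg _))
    rw [hc0, norm_zero] at hc1
    nlinarith [norm_nonneg T]
  have hinj : Function.Injective Φ := by
    intro T₁ T₂ h
    exact sub_eq_zero.mp (hker (T₁ - T₂) (by rw [map_sub, h, sub_self]))
  set e : (X →L[𝕂] 𝕂) ≃ₗ[𝕂] LinearMap.range Φ := LinearEquiv.ofInjective Φ hinj with he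
  set g : (LinearMap.range Φ) →ₗ[𝕂] (X →L[𝕂] 𝕂) := e.symm.toLinearMap with hg
  have hgdef : ∀ c, g c = e.symm c := fun _ => rfl
  have hsymm : ∀ (T : X →L[𝕂] 𝕂) (h : (fun k => T (x k)) ∈ LinearMap.range Φ),
      g ⟨fun k => T (x k), h⟩ = T := by
    intro T h
    rw [hgdef, LinearEquiv.symm_apply_eq]
    exact Subtype.ext (by simp [he, hΦ])
  have hrange : ((LinearMap.range Φ : Submodule 𝕂 (ℕ → 𝕂)) : Set (ℕ → 𝕂))
      = Set.range (fun T : X →L[𝕂] 𝕂 => fun k => T (x k)) := by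
    rw [LinearMap.coe_range]; rfl
  have hmem : ∀ T : X →L[𝕂] 𝕂, (fun k => T (x k)) ∈ LinearMap.range Φ :=
    fun T => LinearMap.mem_range_self Φ T
  clear_value Φ e g
  refine ⟨LinearMap.range Φ, fun c => ‖g c‖, g,
    ?_, ?_, ?_, ?_, ?_, ?_, ?_, ?_, ?_, ?_⟩
  · exact hrange
  · exact hmem
  · intro T h; simp only [hsymm T h]
  · intro c; exact norm_nonneg _
  · intro c
    simp only []
    constructor
    · intro h
      have h0 : g c = 0 := hnz _ h
      have h1 : e.symm c = 0 := (hgdef c) ▸ h0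
      have := congrArg e h1
      rwa [LinearEquiv.apply_symm_apply, map_zero] at this
    · intro h; rw [h, map_zero, norm_zero]
  · intro c d; simp only [map_add]; exact norm_add_le _ _
  · intro γ c; simp only [map_smul]; exact norm_smul γ (g c)
  · intro u hu
    have hcs : CauchySeq (fun k => g (u k)) := by
      rw [Metric.cauchySeq_iff]
      intro ε hε
      obtain ⟨n₀, hn₀⟩ := hu ε hε
      refine ⟨n₀, fun p hp q hq => ?_⟩
      have := hn₀ p q hp hq
      rwa [dist_eq_norm, ← map_sub]
    obtain ⟨T, hT⟩ := cauchySeq_tendsto_of_complete hcs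
    refine ⟨e T, ?_⟩
    have heq : ∀ k, ‖g (u k - e T)‖ = ‖g (u k) - T‖ := by
      intro k
      rw [map_sub]
      simp only [hgdef, LinearEquiv.symm_apply_apply]
    simp only [heq]
    exact tendsto_iff_norm_sub_tendsto_zero.mp hT
  · exact ⟨1, zero_le_one, fun c => by rw [one_mul]⟩
  · exact hsymm
end

section
/- Let ({x_k}, S) be a retro Banach frame associated to (a₂,…,aₙ) for X_F^* with respect to X_d^*, and let {y_k} be a sequence in X such that {x_k + y_k} is a retro Banach Bessel sequence associated to (a₂,…,aₙ) for X_F^* with respect to X_d^* with bound K < ‖S‖⁻¹. Then {y_k} is total over X_F^* (indeed (‖S‖⁻¹ − K)‖T‖ ≤ ‖{T(y_k,a₂,…,aₙ)}ₖ‖ for all T ∈ X_F^*), and there exist a Banach space of scalar sequences X_{d₁}^* = { {T(y_k,a₂,…,aₙ)}ₖ : T ∈ X_F^* } with norm ‖{T(y_k,a₂,…,aₙ)}ₖ‖ := ‖T‖ and a bounded linear operator P : X_{d₁}^* → X_F^* such that ({y_k}, P) is a normalized tight retro Banach frame associated to (a₂,…,aₙ) for X_F^* with respect to X_{d₁}^*.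 -/
open Filter Finset

/-- The linear map sending a functional `T` to the scalar sequence `k ↦ T (y k)`. -/
def seqMap (𝕂 : Type*) {X : Type*} [RCLike 𝕂] [SeminormedAddCommGroup X] [NormedSpace 𝕂 X]
    (y : ℕ → X) : (X →L[𝕂] 𝕂) →ₗ[𝕂] (ℕ → 𝕂) where
  toFun T := fun k => T (y k)
  map_add' T T' := by funext k; simp
  map_smul' c T := by funext k; simp

lemma opnorm_eq_zero' {𝕂 : Type*} [RCLike 𝕂] {X : Type*} [SeminormedAddCommGroup X]
    [NormedSpace 𝕂 X] (T : X →L[𝕂] 𝕂) (h : ‖T‖ = 0) : T = 0 := by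
  ext z
  have := T.le_opNorm z
  rw [h, zero_mul] at this
  simpa using norm_le_zero_iff.mp this

set_option maxHeartbeats 1000000 in
set_option synthInstance.maxHeartbeats 400000 in
theorem statement4
    {𝕂 : Type*} [RCLike 𝕂] {X : Type*} [SeminormedAddCommGroup X] [NormedSpace 𝕂 X]
    {n : ℕ} (hn : 1 ≤ n) {N : (Fin (n + 1) → X) → ℝ} (hN : IsNNorm 𝕂 N)
    (hXBanach : IsNBanach N) {a : Fin n → X} (ha : ∀ z : X, ‖z‖ = N (Fin.cons z a))
    {D : Type*} [NormedAddCommGroup D] [NormedSpace 𝕂 D] [CompleteSpace D]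
    (j : D →ₗ[𝕂] (ℕ → 𝕂)) (hj : Function.Injective j)
    (x y : ℕ → X) (S : D →L[𝕂] (X →L[𝕂] 𝕂)) (A B K : ℝ)
    (hframe : RetroBanachFrame j x S A B)
    (hBessel : RetroBesselSeq j (fun k => x k + y k) K)
    (hK : K < ‖S‖⁻¹) :
    (∀ T : X →L[𝕂] 𝕂, ∃ c : D, j c = (fun k => T (y k)) ∧ (‖S‖⁻¹ - K) * ‖T‖ ≤ ‖c‖) ∧
    TotalOver 𝕂 y ∧
    ∃ (W : Submodule 𝕂 (ℕ → 𝕂)) (nw : W → ℝ) (P : W →ₗ[𝕂] (X →L[𝕂] 𝕂)),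
      (W : Set (ℕ → 𝕂)) = Set.range (fun T : X →L[𝕂] 𝕂 => fun k => T (y k)) ∧
      (∀ T : X →L[𝕂] 𝕂, (fun k => T (y k)) ∈ W) ∧
      (∀ (T : X →L[𝕂] 𝕂) (h : (fun k => T (y k)) ∈ W), nw ⟨fun k => T (y k), h⟩ = ‖T‖) ∧
      (∀ c : W, 0 ≤ nw c) ∧
      (∀ c : W, nw c = 0 ↔ c = 0) ∧
      (∀ c d : W, nw (c + d) ≤ nw c + nw d) ∧
      (∀ (γ : 𝕂) (c : W), nw (γ • c) = ‖γ‖ * nw c) ∧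
      (∀ u : ℕ → W,
        (∀ ε : ℝ, 0 < ε → ∃ n₀ : ℕ, ∀ p q : ℕ, n₀ ≤ p → n₀ ≤ q → nw (u p - u q) < ε) →
        ∃ c : W, Tendsto (fun k => nw (u k - c)) atTop (nhds 0)) ∧
      (∃ Cb : ℝ, 0 ≤ Cb ∧ ∀ c : W, ‖P c‖ ≤ Cb * nw c) ∧
      (∀ (T : X →L[𝕂] 𝕂) (h : (fun k => T (y k)) ∈ W), P ⟨fun k => T (y k), h⟩ = T) := by
  obtain ⟨hA, hAB, hfr⟩ := hframe
  obtain ⟨hKpos, hbes⟩ := hBessel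
  have hSinv : (0:ℝ) < ‖S‖⁻¹ := lt_trans hKpos hK
  have hS : (0:ℝ) < ‖S‖ := inv_pos.mp hSinv
  have key : ∀ T : X →L[𝕂] 𝕂, ∃ c : D, j c = (fun k => T (y k)) ∧
      (‖S‖⁻¹ - K) * ‖T‖ ≤ ‖c‖ := by
    intro T
    obtain ⟨c1, hc1, hc1A, hc1B, hc1S⟩ := hfr T
    obtain ⟨c2, hc2, hc2K⟩ := hbes T
    refine ⟨c2 - c1, ?_, ?_⟩
    · funext k
      have h1 : j c1 k = T (x k) := congrFun hc1 k
      have h2 : j c2 k = T (x k + y k) := congrFun hc2 k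
      have : j (c2 - c1) k = j c2 k - j c1 k := by simp [map_sub]
      rw [this, h1, h2, map_add]
      ring
    · have hT : ‖T‖ ≤ ‖S‖ * ‖c1‖ := by
        calc ‖T‖ = ‖S c1‖ := by rw [hc1S]
        _ ≤ ‖S‖ * ‖c1‖ := S.le_opNorm c1
      have h1 : ‖S‖⁻¹ * ‖T‖ ≤ ‖c1‖ := by
        have := mul_le_mul_of_nonneg_left hT (le_of_lt hSinv)
        rwa [← mul_assoc, inv_mul_cancel₀ (ne_of_gt hS), one_mul] at this
      have h2 : ‖c1‖ - ‖c2‖ ≤ ‖c2 - c1‖ := by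
        rw [norm_sub_rev]; exact norm_sub_norm_le c1 c2
      nlinarith [norm_nonneg T]
  refine ⟨key, ?_⟩
  have htotal : TotalOver 𝕂 y := by
    intro T hT
    obtain ⟨c, hc, hge⟩ := key T
    have hc0 : c = 0 := by
      apply hj
      rw [hc, map_zero]
      funext k; simp [hT k]
    rw [hc0, norm_zero] at hge
    have hT0 : ‖T‖ = 0 := by nlinarith [norm_nonneg T]
    exact opnorm_eq_zero' T hT0
  refine ⟨htotal, ?_⟩
  set Φ := seqMap 𝕂 y with hΦ
  have hΦapp : ∀ T : X →L[𝕂] 𝕂, Φ T = fun k => T (y k) := fun T => rfl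
  have hinj : Function.Injective Φ := by
    intro T T' h
    have h0 : T - T' = 0 := by
      apply htotal
      intro k
      have := congrFun h k
      simp only [hΦapp] at this
      simp [this]
    exact sub_eq_zero.mp h0
  set e := LinearEquiv.ofInjective Φ hinj with he
  have hecoe : ∀ T : X →L[𝕂] 𝕂, ((e T : LinearMap.range Φ) : ℕ → 𝕂) = Φ T := by
    intro T; rfl
  have hsymm : ∀ (T : X →L[𝕂] 𝕂) (h : (fun k => T (y k)) ∈ LinearMap.range Φ),
      e.symm ⟨fun k => T (y k), h⟩ = T := by
    intro T h
    apply hinj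
    have : e (e.symm ⟨fun k => T (y k), h⟩) = ⟨fun k => T (y k), h⟩ := e.apply_symm_apply _
    have := congrArg (Subtype.val) this
    rw [hecoe] at this
    simpa [hΦapp] using this
  refine ⟨LinearMap.range Φ, fun c => ‖e.symm c‖, e.symm.toLinearMap, ?_, ?_, ?_, ?_, ?_, ?_, ?_,
    ?_, ?_, ?_⟩
  · ext z
    simp only [SetLike.mem_coe, LinearMap.mem_range, Set.mem_range]
    constructor
    · rintro ⟨T, rfl⟩; exact ⟨T, rfl⟩
    · rintro ⟨T, rfl⟩; exact ⟨T, rfl⟩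
  · intro T; exact ⟨T, rfl⟩
  · intro T h
    show ‖e.symm ⟨fun k => T (y k), h⟩‖ = ‖T‖
    rw [hsymm T h]
  · intro c; exact norm_nonneg _
  · intro c
    constructor
    · intro h
      have h0 : e.symm c = 0 := opnorm_eq_zero' _ h
      have : c = e (e.symm c) := (e.apply_symm_apply c).symm
      rw [this, h0, map_zero]
    · intro h
      subst h
      show ‖e.symm 0‖ = 0
      rw [map_zero, norm_zero]
  · intro c d
    show ‖e.symm (c + d)‖ ≤ ‖e.symm c‖ + ‖e.symm d‖
    rw [map_add]; exact norm_add_le _ _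
  · intro γ c
    show ‖e.symm (γ • c)‖ = ‖γ‖ * ‖e.symm c‖
    rw [map_smul]; exact norm_smul γ (e.symm c)
  · intro u hu
    have hcs : CauchySeq (fun k => e.symm (u k)) := by
      rw [Metric.cauchySeq_iff]
      intro ε hε
      obtain ⟨n₀, hn₀⟩ := hu ε hε
      refine ⟨n₀, fun p hp q hq => ?_⟩
      rw [dist_eq_norm, ← map_sub]
      exact hn₀ p q hp hq
    obtain ⟨T, hTlim⟩ := cauchySeq_tendsto_of_complete hcs
    refine ⟨e T, ?_⟩
    have : ∀ k, ‖e.symm (u k - e T)‖ = ‖e.symm (u k) - T‖ := by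
      intro k; rw [map_sub, e.symm_apply_apply]
    simp only [this]
    exact tendsto_iff_norm_sub_tendsto_zero.mp hTlim
  · exact ⟨1, zero_le_one, fun c => by simp⟩
  · intro T h
    exact hsymm T h
end

section
/- Let ({x_k}, S) be a retro Banach frame associated to (a₂,…,aₙ) for X_F^* with respect to X_d^* with bounds A, B, let {y_k} be a sequence in X with {T(y_k,a₂,…,aₙ)}ₖ ∈ X_d^* for all T ∈ X_F^*, and let R : X_d^* → X_d^* be a bounded linear operator with R({T(y_k,a₂,…,aₙ)}ₖ) = {T(x_k,a₂,…,aₙ)}ₖ for all T ∈ X_F^*. Then there exists a bounded linear operator P : X_d^* → X_F^* such that ({y_k}, P) is a retro Banach frame associated to (a₂,…,aₙ) for X_F^* with respect to X_d^* if and only if there exists a constant K > 1 such that ‖{T(x_k − y_k,a₂,…,aₙ)}ₖ‖ ≤ K·min{ ‖{T(x_k,a₂,…,aₙ)}ₖ‖, ‖{T(y_k,a₂,…,aₙ)}ₖ‖ } for all T ∈ X_F^*. Moreover, when such K exists one may take P = S∘R, and ({y_k}, P) has bounds A/(K+1) and B(K+1). -/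
open Filter Finset

theorem statement9
    {𝕂 : Type*} [RCLike 𝕂] {X : Type*} [SeminormedAddCommGroup X] [NormedSpace 𝕂 X]
    {n : ℕ} (hn : 1 ≤ n) {N : (Fin (n + 1) → X) → ℝ} (hN : IsNNorm 𝕂 N)
    (hXBanach : IsNBanach N) {a : Fin n → X} (ha : ∀ z : X, ‖z‖ = N (Fin.cons z a))
    {D : Type*} [NormedAddCommGroup D] [NormedSpace 𝕂 D] [CompleteSpace D]
    (j : D →ₗ[𝕂] (ℕ → 𝕂)) (hj : Function.Injective j)
    (x y : ℕ → X) (S : D →L[𝕂] (X →L[𝕂] 𝕂)) (A B : ℝ)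
    (hx : RetroBanachFrame j x S A B)
    (hy : ∀ T : X →L[𝕂] 𝕂, ∃ c : D, j c = fun k => T (y k))
    (R : D →L[𝕂] D)
    (hR : ∀ (T : X →L[𝕂] 𝕂) (c : D), j c = (fun k => T (y k)) →
      j (R c) = fun k => T (x k)) :
    ((∃ (P : D →L[𝕂] (X →L[𝕂] 𝕂)) (A' B' : ℝ), RetroBanachFrame j y P A' B') ↔
      (∃ K : ℝ, 1 < K ∧ ∀ (T : X →L[𝕂] 𝕂) (cx cy : D),
        j cx = (fun k => T (x k)) → j cy = (fun k => T (y k)) →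
          ‖cx - cy‖ ≤ K * min ‖cx‖ ‖cy‖)) ∧
    (∀ K : ℝ, 1 < K →
      (∀ (T : X →L[𝕂] 𝕂) (cx cy : D),
        j cx = (fun k => T (x k)) → j cy = (fun k => T (y k)) →
          ‖cx - cy‖ ≤ K * min ‖cx‖ ‖cy‖) →
      RetroBanachFrame j y (S.comp R) (A / (K + 1)) (B * (K + 1))) := by
  obtain ⟨hA, hAB, hframe⟩ := hx
  have key : ∀ K : ℝ, 1 < K →
      (∀ (T : X →L[𝕂] 𝕂) (cx cy : D),
        j cx = (fun k => T (x k)) → j cy = (fun k => T (y k)) →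
          ‖cx - cy‖ ≤ K * min ‖cx‖ ‖cy‖) →
      RetroBanachFrame j y (S.comp R) (A / (K + 1)) (B * (K + 1)) := by
    intro K hK hineq
    have hK1 : (0:ℝ) < K + 1 := by linarith
    have hKpos : (0:ℝ) ≤ K := by linarith
    refine ⟨by positivity, ?_, ?_⟩
    · rw [div_le_iff₀ hK1]
      have h4 : (1:ℝ) ≤ (K + 1) * (K + 1) := by nlinarith
      calc A ≤ B := hAB
        _ = B * 1 := (mul_one B).symm
        _ ≤ B * ((K + 1) * (K + 1)) :=
            mul_le_mul_of_nonneg_left h4 (le_trans hA.le hAB)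
        _ = B * (K + 1) * (K + 1) := by ring
    · intro T
      obtain ⟨cy, hcy⟩ := hy T
      obtain ⟨cx, hcx, hlo, hhi, hS⟩ := hframe T
      have hRcy : j (R cy) = fun k => T (x k) := hR T cy hcy
      have hxeq : cx = R cy := hj (by rw [hcx, hRcy])
      have hmin := hineq T cx cy hcx hcy
      have hKy : K * min ‖cx‖ ‖cy‖ ≤ K * ‖cy‖ :=
        mul_le_mul_of_nonneg_left (min_le_right _ _) hKpos
      have hKx : K * min ‖cx‖ ‖cy‖ ≤ K * ‖cx‖ :=
        mul_le_mul_of_nonneg_left (min_le_left _ _) hKpos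
      have h1 : ‖cx‖ ≤ ‖cy‖ + ‖cx - cy‖ := by
        have := norm_add_le cy (cx - cy); simpa using this
      have h2 : ‖cy‖ ≤ ‖cx‖ + ‖cx - cy‖ := by
        have := norm_add_le cx (cy - cx)
        rw [← norm_neg (cy - cx)] at this
        simpa using this
      refine ⟨cy, hcy, ?_, ?_, ?_⟩
      · rw [div_mul_eq_mul_div, div_le_iff₀ hK1]
        have : ‖cx‖ ≤ ‖cy‖ * (K + 1) := by ring_nf; linarith
        linarith
      · have h3 : ‖cy‖ ≤ (K + 1) * ‖cx‖ := by ring_nf; linarith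
        have h4 : (K + 1) * ‖cx‖ ≤ (K + 1) * (B * ‖T‖) :=
          mul_le_mul_of_nonneg_left hhi hK1.le
        calc ‖cy‖ ≤ (K + 1) * (B * ‖T‖) := le_trans h3 h4
          _ = B * (K + 1) * ‖T‖ := by ring
      · rw [ContinuousLinearMap.comp_apply, ← hxeq, hS]
  constructor
  · constructor
    · rintro ⟨P, A', B', hA', hA'B', hframe'⟩
      set m := min A A' with hm
      have hm0 : 0 < m := lt_min hA hA'
      have hBB' : 0 < B + B' := by linarith
      refine ⟨(B + B') / m + 2, by have := div_pos hBB' hm0; linarith, ?_⟩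
      intro T cx cy hcx hcy
      obtain ⟨cx', hcx', hlo, hhi, _⟩ := hframe T
      obtain ⟨cy', hcy', hlo', hhi', _⟩ := hframe' T
      have ex : cx = cx' := hj (by rw [hcx, hcx'])
      have ey : cy = cy' := hj (by rw [hcy, hcy'])
      subst ex; subst ey
      have hsub : ‖cx - cy‖ ≤ (B + B') * ‖T‖ := by
        have := norm_sub_le cx cy
        rw [add_mul]; linarith
      have hminT : m * ‖T‖ ≤ min ‖cx‖ ‖cy‖ := by
        refine le_min (le_trans ?_ hlo) (le_trans ?_ hlo')
        · exact mul_le_mul_of_nonneg_right (min_le_left A A') (norm_nonneg _)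
        · exact mul_le_mul_of_nonneg_right (min_le_right A A') (norm_nonneg _)
      have hdm : (B + B') / m * m = B + B' := div_mul_cancel₀ _ (ne_of_gt hm0)
      have hK0 : (0:ℝ) < (B + B') / m + 2 := by positivity
      have h2m : (0:ℝ) ≤ 2 * (m * ‖T‖) := by positivity
      calc ‖cx - cy‖ ≤ (B + B') * ‖T‖ := hsub
        _ ≤ ((B + B') / m + 2) * (m * ‖T‖) := by
            have heq : ((B + B') / m + 2) * (m * ‖T‖)
                = ((B + B') / m * m) * ‖T‖ + 2 * (m * ‖T‖) := by ring
            rw [heq, hdm]; linarith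
        _ ≤ ((B + B') / m + 2) * min ‖cx‖ ‖cy‖ :=
            mul_le_mul_of_nonneg_left hminT hK0.le
    · rintro ⟨K, hK, hineq⟩
      exact ⟨S.comp R, _, _, key K hK hineq⟩
  · exact key
end

section
/- Let ({x_k}, S) be a retro Banach frame associated to (a₂,…,aₙ) for X_F^* with respect to X_d^* with bounds A, B. Let {y_k} be a sequence in X such that {T(y_k,a₂,…,aₙ)}ₖ ∈ X_d^* and ‖{T(y_k,a₂,…,aₙ)}ₖ‖ ≤ K‖T‖ for all T ∈ X_F^*, for some constant K > 0. Then for every nonzero scalar λ with |λ| < ‖S‖⁻¹/K, there exists a bounded linear operator P : X_d^* → X_F^* such that ({x_k + λ y_k}, P) is a retro Banach frame associated to (a₂,…,aₙ) for X_F^* with respect to X_d^*, with bounds ‖S‖⁻¹ − |λ|K and B + |λ|K. -/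
open Filter Finset

lemma aux_oneAdd_inv {𝕂 D : Type*} [RCLike 𝕂] [NormedAddCommGroup D] [NormedSpace 𝕂 D]
    [CompleteSpace D] (v : D →L[𝕂] D) (hv : ‖v‖ < 1) :
    ∃ w : D →L[𝕂] D, ∀ c : D, w (c + v c) = c := by
  have h : ‖-v‖ < 1 := by rwa [norm_neg]
  refine ⟨((Units.oneSub (-v) h)⁻¹ : _ˣ), fun c => ?_⟩
  have h1 : ((Units.oneSub (-v) h : _ˣ) : D →L[𝕂] D) c = c + v c := by
    show ((1 : D →L[𝕂] D) - (-v)) c = _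
    rw [sub_neg_eq_add]
    simp
  rw [← h1, ← ContinuousLinearMap.mul_apply, Units.inv_mul, ContinuousLinearMap.one_apply]

set_option maxHeartbeats 1000000 in
theorem statement11
    {𝕂 : Type*} [RCLike 𝕂] {X : Type*} [SeminormedAddCommGroup X] [NormedSpace 𝕂 X]
    {n : ℕ} (hn : 1 ≤ n) {N : (Fin (n + 1) → X) → ℝ} (hN : IsNNorm 𝕂 N)
    (hXBanach : IsNBanach N) {a : Fin n → X} (ha : ∀ z : X, ‖z‖ = N (Fin.cons z a))
    {D : Type*} [NormedAddCommGroup D] [NormedSpace 𝕂 D] [CompleteSpace D]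
    (j : D →ₗ[𝕂] (ℕ → 𝕂)) (hj : Function.Injective j)
    (x y : ℕ → X) (S : D →L[𝕂] (X →L[𝕂] 𝕂)) (A B K : ℝ)
    (hx : RetroBanachFrame j x S A B) (hK : 0 < K)
    (hy : ∀ T : X →L[𝕂] 𝕂, ∃ c : D, j c = (fun k => T (y k)) ∧ ‖c‖ ≤ K * ‖T‖)
    (lam : 𝕂) (hlam : lam ≠ 0) (hlamK : ‖lam‖ < ‖S‖⁻¹ / K) :
    ∃ P : D →L[𝕂] (X →L[𝕂] 𝕂),
      RetroBanachFrame j (fun k => x k + lam • y k) P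
        (‖S‖⁻¹ - ‖lam‖ * K) (B + ‖lam‖ * K) := by
  classical
  have hlam0 : 0 < ‖lam‖ := norm_pos_iff.mpr hlam
  have hdiv : 0 < ‖S‖⁻¹ / K := lt_trans hlam0 hlamK
  have hSinv : 0 < ‖S‖⁻¹ := by
    rcases div_pos_iff.mp hdiv with ⟨h1, _⟩ | ⟨_, h2⟩
    · exact h1
    · linarith
  have hSpos : 0 < ‖S‖ := inv_pos.mp hSinv
  have hSS : ‖S‖ * ‖S‖⁻¹ = 1 := mul_inv_cancel₀ (ne_of_gt hSpos)
  have hlamK' : ‖lam‖ * K < ‖S‖⁻¹ := (lt_div_iff₀ hK).mp hlamK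
  -- the Bessel map
  set f : (X →L[𝕂] 𝕂) → D := fun T => Classical.choose (hy T) with hfdef
  have hf1 : ∀ T, j (f T) = fun k => T (y k) := fun T => (Classical.choose_spec (hy T)).1
  have hf2 : ∀ T, ‖f T‖ ≤ K * ‖T‖ := fun T => (Classical.choose_spec (hy T)).2
  have hfadd : ∀ T T' : X →L[𝕂] 𝕂, f (T + T') = f T + f T' := by
    intro T T'
    apply hj
    rw [map_add, hf1, hf1, hf1]
    funext k
    simp
  have hfsmul : ∀ (c : 𝕂) (T : X →L[𝕂] 𝕂), f (c • T) = c • f T := by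
    intro c T
    apply hj
    rw [map_smul, hf1, hf1]
    funext k
    simp
  let g : (X →L[𝕂] 𝕂) →L[𝕂] D :=
    LinearMap.mkContinuous
      { toFun := f, map_add' := hfadd, map_smul' := hfsmul } K (fun T => hf2 T)
  have hg : ∀ T, g T = f T := fun T => rfl
  have hgnorm : ‖g‖ ≤ K :=
    LinearMap.mkContinuous_norm_le _ (le_of_lt hK) _
  -- the perturbation operator on `D`
  have hnorm : ‖-(lam • (g.comp S))‖ < 1 := by
    calc ‖-(lam • (g.comp S))‖ ≤ ‖lam‖ * ‖g.comp S‖ := by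
            rw [norm_neg]; exact norm_smul_le lam (g.comp S)
      _ ≤ ‖lam‖ * (K * ‖S‖) := by
            refine mul_le_mul_of_nonneg_left ?_ (norm_nonneg lam)
            exact le_trans (ContinuousLinearMap.opNorm_comp_le g S)
              (mul_le_mul_of_nonneg_right hgnorm (norm_nonneg S))
      _ = (‖lam‖ * K) * ‖S‖ := by ring
      _ < ‖S‖⁻¹ * ‖S‖ := mul_lt_mul_of_pos_right hlamK' hSpos
      _ = 1 := by rw [inv_mul_cancel₀ (ne_of_gt hSpos)]
  obtain ⟨w, hw⟩ := aux_oneAdd_inv (lam • (g.comp S)) (by rwa [norm_neg] at hnorm)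
  have hw' : ∀ c : D, w (c + lam • g (S c)) = c := by
    intro c
    have := hw c
    simpa using this
  refine ⟨S.comp w, ?_, ?_, ?_⟩
  · linarith
  · -- ‖S‖⁻¹ ≤ B
    have hSB : ‖S‖⁻¹ ≤ B := by
      obtain ⟨T, hT⟩ : ∃ T : X →L[𝕂] 𝕂, 0 < ‖T‖ := by
        by_contra h
        push_neg at h
        have hS0 : ‖S‖ ≤ 0 := by
          refine ContinuousLinearMap.opNorm_le_bound S le_rfl (fun c => ?_)
          have := h (S c)
          nlinarith [norm_nonneg c]
        linarith
      obtain ⟨c, _, _, hc3, hc4⟩ := hx.2.2 T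
      have h1 : ‖T‖ ≤ ‖S‖ * ‖c‖ := by
        calc ‖T‖ = ‖S c‖ := by rw [hc4]
          _ ≤ ‖S‖ * ‖c‖ := S.le_opNorm c
      have h2 : 1 ≤ ‖S‖ * B := by nlinarith
      nlinarith
    have hK0 : 0 ≤ ‖lam‖ * K := by positivity
    linarith
  · intro T
    obtain ⟨c, hc1, hc2, hc3, hc4⟩ := hx.2.2 T
    refine ⟨c + lam • f T, ?_, ?_, ?_, ?_⟩
    · rw [map_add, map_smul, hc1, hf1]
      funext k
      simp [mul_comm]
    · -- lower bound
      have h1 : ‖T‖ ≤ ‖S‖ * ‖c‖ := by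
        calc ‖T‖ = ‖S c‖ := by rw [hc4]
          _ ≤ ‖S‖ * ‖c‖ := S.le_opNorm c
      have h2 : ‖S‖⁻¹ * ‖T‖ ≤ ‖c‖ := by nlinarith [norm_nonneg c]
      have h3 : ‖c‖ ≤ ‖c + lam • f T‖ + ‖lam‖ * ‖f T‖ := by
        have h5 : ‖(c + lam • f T) + (-(lam • f T))‖ ≤ ‖c + lam • f T‖ + ‖lam • f T‖ := by
          refine le_trans (norm_add_le _ _) ?_
          rw [norm_neg]
        simpa [norm_smul] using h5
      have h4 : ‖f T‖ ≤ K * ‖T‖ := hf2 T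
      nlinarith [norm_nonneg lam, norm_nonneg (f T), norm_nonneg T]
    · -- upper bound
      have h4 : ‖f T‖ ≤ K * ‖T‖ := hf2 T
      calc ‖c + lam • f T‖ ≤ ‖c‖ + ‖lam • f T‖ := norm_add_le _ _
        _ = ‖c‖ + ‖lam‖ * ‖f T‖ := by rw [norm_smul]
        _ ≤ B * ‖T‖ + ‖lam‖ * (K * ‖T‖) :=
            add_le_add hc3 (mul_le_mul_of_nonneg_left h4 (norm_nonneg lam))
        _ = (B + ‖lam‖ * K) * ‖T‖ := by ring
    · -- reconstruction
      have key : c + lam • f T = c + lam • g (S c) := by rw [hc4, hg]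
      rw [ContinuousLinearMap.comp_apply, key, hw' c, hc4]
end

section
/- Assume the norm of X_d^* is solid. Let ({x_k}, S) be a retro Banach frame associated to (a₂,…,aₙ) for X_F^* with respect to X_d^*, with coefficient mapping U(T) = {T(x_k,a₂,…,aₙ)}ₖ. Let {y_k} be a sequence in X and {α_k} a positively confined sequence of positive reals such that {T(α_k y_k,a₂,…,aₙ)}ₖ ∈ X_d^* for all T ∈ X_F^*, and suppose the map V : X_F^* → X_d^*, V(T) = {T(y_k,a₂,…,aₙ)}ₖ, is a bounded linear operator with ‖V‖ < ‖S‖⁻¹ / (sup_k α_k). Then there exists a bounded linear operator P : X_d^* → X_F^* such that ({x_k + α_k y_k}, P) is a retro Banach frame associated to (a₂,…,aₙ) for X_F^* with respect to X_d^*, with bounds ‖S‖⁻¹ − (sup_k α_k)‖V‖ and ‖U‖ + (sup_k α_k)‖V‖. -/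
open Filter Finset

set_option maxHeartbeats 1600000 in
theorem statement12
    {𝕂 : Type*} [RCLike 𝕂] {X : Type*} [SeminormedAddCommGroup X] [NormedSpace 𝕂 X]
    {n : ℕ} (hn : 1 ≤ n) {N : (Fin (n + 1) → X) → ℝ} (hN : IsNNorm 𝕂 N)
    (hXBanach : IsNBanach N) {a : Fin n → X} (ha : ∀ z : X, ‖z‖ = N (Fin.cons z a))
    {D : Type*} [NormedAddCommGroup D] [NormedSpace 𝕂 D] [CompleteSpace D]
    (j : D →ₗ[𝕂] (ℕ → 𝕂)) (hj : Function.Injective j)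
    (hsolid : SolidNorm j)
    (x y : ℕ → X) (S : D →L[𝕂] (X →L[𝕂] 𝕂)) (A B : ℝ)
    (hx : RetroBanachFrame j x S A B)
    (U : (X →L[𝕂] 𝕂) →L[𝕂] D) (hU : ∀ T : X →L[𝕂] 𝕂, j (U T) = fun k => T (x k))
    (α : ℕ → ℝ) (hα : PositivelyConfined α)
    (hmem : ∀ T : X →L[𝕂] 𝕂, ∃ c : D, j c = fun k => T ((α k : 𝕂) • y k))
    (V : (X →L[𝕂] 𝕂) →L[𝕂] D) (hV : ∀ T : X →L[𝕂] 𝕂, j (V T) = fun k => T (y k))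
    (hVnorm : ‖V‖ < ‖S‖⁻¹ / (⨆ k, α k)) :
    ∃ P : D →L[𝕂] (X →L[𝕂] 𝕂),
      RetroBanachFrame j (fun k => x k + (α k : 𝕂) • y k) P
        (‖S‖⁻¹ - (⨆ k, α k) * ‖V‖) (‖U‖ + (⨆ k, α k) * ‖V‖) := by
  classical
  obtain ⟨hA, hAB, hframe⟩ := hx
  obtain ⟨hαinf, hαbdd⟩ := hα
  -- S ∘ U = id
  have hSU : ∀ T : X →L[𝕂] 𝕂, S (U T) = T := by
    intro T
    obtain ⟨c, hc, -, -, hSc⟩ := hframe T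
    rwa [show c = U T from hj (by rw [hU T, hc])] at hSc
  -- basic facts about α
  have hbddb : BddBelow (Set.range α) := by
    by_contra h
    rw [Real.iInf_of_not_bddBelow h] at hαinf
    exact lt_irrefl _ hαinf
  have hαpos : ∀ k, 0 < α k := fun k => hαinf.trans_le (ciInf_le hbddb k)
  have hspos : 0 < ⨆ k, α k := (hαpos 0).trans_le (le_ciSup hαbdd 0)
  have hSpos : 0 < ‖S‖ := by
    rcases (norm_nonneg S).lt_or_eq with h | h
    · exact h
    · exfalso
      rw [← h, inv_zero, zero_div] at hVnorm
      exact absurd hVnorm (not_lt.2 (norm_nonneg V))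
  have hsv : (⨆ k, α k) * ‖V‖ < ‖S‖⁻¹ := by
    have := (lt_div_iff₀ hspos).mp hVnorm
    linarith [this]
  -- the solid-norm perturbation sequence
  have hγnorm : (fun k => ‖((α k : ℝ) : 𝕂)‖) = α := funext fun k => by
    simp [abs_of_pos (hαpos k)]
  have hγinf : 0 < ⨅ k, ‖((α k : ℝ) : 𝕂)‖ := by
    rw [show (⨅ k, ‖((α k : ℝ) : 𝕂)‖) = ⨅ k, α k from congrArg iInf hγnorm]
    exact hαinf
  have hγbdd : BddAbove (Set.range fun k => ‖((α k : ℝ) : 𝕂)‖) := by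
    rw [hγnorm]; exact hαbdd
  have hγsup : (⨆ k, ‖((α k : ℝ) : 𝕂)‖) = ⨆ k, α k := congrArg iSup hγnorm
  choose W hjW hWlow hWhigh using fun T : X →L[𝕂] 𝕂 =>
    hsolid (fun k => ((α k : ℝ) : 𝕂)) (V T) hγinf hγbdd
  have hWb : ∀ T, ‖W T‖ ≤ ((⨆ k, α k) * ‖V‖) * ‖T‖ := by
    intro T
    calc ‖W T‖ ≤ (⨆ k, α k) * ‖V T‖ := hγsup ▸ hWhigh T
      _ ≤ (⨆ k, α k) * (‖V‖ * ‖T‖) :=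
        mul_le_mul_of_nonneg_left (V.le_opNorm T) hspos.le
      _ = ((⨆ k, α k) * ‖V‖) * ‖T‖ := by ring
  -- W is linear
  have hWadd : ∀ T T' : X →L[𝕂] 𝕂, W (T + T') = W T + W T' := by
    intro T T'
    apply hj
    rw [map_add, hjW, hjW, hjW]
    funext k
    simp [mul_add]
  have hWsmul : ∀ (c : 𝕂) (T : X →L[𝕂] 𝕂), W (c • T) = c • W T := by
    intro c T
    apply hj
    rw [map_smul, hjW, hjW]
    funext k
    simp [smul_eq_mul]
    ring
  let Wl : (X →L[𝕂] 𝕂) →ₗ[𝕂] D :=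
    { toFun := W, map_add' := hWadd, map_smul' := hWsmul }
  let Wc : (X →L[𝕂] 𝕂) →L[𝕂] D := Wl.mkContinuous ((⨆ k, α k) * ‖V‖) hWb
  have hWcnorm : ‖Wc‖ ≤ (⨆ k, α k) * ‖V‖ :=
    Wl.mkContinuous_norm_le (mul_nonneg hspos.le (norm_nonneg V)) hWb
  let K : (X →L[𝕂] 𝕂) →L[𝕂] (X →L[𝕂] 𝕂) := S.comp Wc
  have hKapp : ∀ T, K T = S (W T) := fun T => rfl
  have hKb : ∀ T, ‖K T‖ ≤ ‖S‖ * (((⨆ k, α k) * ‖V‖) * ‖T‖) := by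
    intro T
    calc ‖K T‖ = ‖S (W T)‖ := rfl
      _ ≤ ‖S‖ * ‖W T‖ := S.le_opNorm _
      _ ≤ ‖S‖ * (((⨆ k, α k) * ‖V‖) * ‖T‖) :=
        mul_le_mul_of_nonneg_left (hWb T) hSpos.le
  have hK1 : ‖K‖ < 1 := by
    calc ‖K‖ ≤ ‖S‖ * ‖Wc‖ := S.opNorm_comp_le Wc
      _ ≤ ‖S‖ * ((⨆ k, α k) * ‖V‖) := mul_le_mul_of_nonneg_left hWcnorm hSpos.le
      _ < ‖S‖ * ‖S‖⁻¹ := by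
          exact mul_lt_mul_of_pos_left hsv hSpos
      _ = 1 := mul_inv_cancel₀ hSpos.ne'
  -- the operator norm on X →L[𝕂] 𝕂 is separating
  have hsep : ∀ T : X →L[𝕂] 𝕂, ‖T‖ = 0 → T = 0 := by
    intro T hT
    ext z
    have h1 : ‖T z‖ ≤ 0 := by simpa [hT] using T.le_opNorm z
    simpa using norm_le_zero_iff.mp h1
  letI : NormedAddCommGroup (X →L[𝕂] 𝕂) := NormedAddCommGroup.ofSeparation hsep
  -- invert 1 + K
  let e : ((X →L[𝕂] 𝕂) →L[𝕂] (X →L[𝕂] 𝕂))ˣ := Units.oneSub (-K) (lt_of_le_of_lt (norm_neg K).le hK1)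
  have heval : ∀ T, (e : (X →L[𝕂] 𝕂) →L[𝕂] (X →L[𝕂] 𝕂)) T = T + K T := by
    intro T
    show ((1 : (X →L[𝕂] 𝕂) →L[𝕂] (X →L[𝕂] 𝕂)) - (-K)) T = T + K T
    simp [sub_eq_add_neg]
  have hinv : ∀ T, (↑e⁻¹ : (X →L[𝕂] 𝕂) →L[𝕂] (X →L[𝕂] 𝕂))
      ((e : (X →L[𝕂] 𝕂) →L[𝕂] (X →L[𝕂] 𝕂)) T) = T := by
    intro T
    have h := e.inv_mul
    calc (↑e⁻¹ : (X →L[𝕂] 𝕂) →L[𝕂] (X →L[𝕂] 𝕂))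
          ((↑e : (X →L[𝕂] 𝕂) →L[𝕂] (X →L[𝕂] 𝕂)) T)
        = ((↑e⁻¹ * ↑e : (X →L[𝕂] 𝕂) →L[𝕂] (X →L[𝕂] 𝕂))) T := rfl
      _ = T := by rw [h]; rfl
  refine ⟨(↑e⁻¹ : (X →L[𝕂] 𝕂) →L[𝕂] (X →L[𝕂] 𝕂)).comp S, sub_pos.2 hsv, ?_, ?_⟩
  · -- A' ≤ B'
    have hUS : ‖S‖⁻¹ ≤ ‖U‖ := by
      have hSne : S ≠ 0 := fun h0 =>
        hSpos.ne' ((congrArg (fun L : D →L[𝕂] (X →L[𝕂] 𝕂) => ‖L‖) h0).trans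
          ContinuousLinearMap.opNorm_zero)
      obtain ⟨c0, hc0⟩ : ∃ c0 : D, S c0 ≠ 0 := by
        by_contra h
        push_neg at h
        exact hSne (by ext c; simp [h c])
      have hT0 : ‖S c0‖ ≠ 0 := fun h => hc0 (hsep _ h)
      have hT0pos : 0 < ‖S c0‖ := (norm_nonneg _).lt_of_ne' hT0
      have h1 : ‖S c0‖ ≤ ‖S‖ * (‖U‖ * ‖S c0‖) := by
        calc ‖S c0‖ = ‖S (U (S c0))‖ := by rw [hSU]
          _ ≤ ‖S‖ * ‖U (S c0)‖ := S.le_opNorm _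
          _ ≤ ‖S‖ * (‖U‖ * ‖S c0‖) :=
            mul_le_mul_of_nonneg_left (U.le_opNorm _) hSpos.le
      have h2 : 1 ≤ ‖S‖ * ‖U‖ := by
        by_contra h2
        push_neg at h2
        nlinarith [hT0pos]
      calc ‖S‖⁻¹ = ‖S‖⁻¹ * 1 := by ring
        _ ≤ ‖S‖⁻¹ * (‖S‖ * ‖U‖) :=
          mul_le_mul_of_nonneg_left h2 (inv_nonneg.mpr hSpos.le)
        _ = ‖U‖ := by field_simp
    have hnn : 0 ≤ (⨆ k, α k) * ‖V‖ := mul_nonneg hspos.le (norm_nonneg V)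
    linarith
  · intro T
    refine ⟨U T + W T, ?_, ?_, ?_, ?_⟩
    · -- coefficient identity
      rw [map_add, hU, hjW, hV]
      funext k
      simp [map_smul, smul_eq_mul]
    · -- lower bound
      have hScT : S (U T + W T) = T + K T := by
        rw [map_add, hSU, hKapp]
      have hTle : ‖T‖ ≤ ‖S‖ * ‖U T + W T‖ + ‖S‖ * (((⨆ k, α k) * ‖V‖) * ‖T‖) := by
        have hT : T = S (U T + W T) - K T := by rw [hScT, add_sub_cancel_right]
        calc ‖T‖ = ‖S (U T + W T) - K T‖ := by rw [← hT]
          _ ≤ ‖S (U T + W T)‖ + ‖K T‖ := norm_sub_le _ _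
          _ ≤ ‖S‖ * ‖U T + W T‖ + ‖S‖ * (((⨆ k, α k) * ‖V‖) * ‖T‖) :=
            add_le_add (S.le_opNorm _) (hKb T)
      have h3 : ‖S‖⁻¹ * ‖S‖ = 1 := inv_mul_cancel₀ hSpos.ne'
      have key : ‖S‖⁻¹ * ‖T‖ ≤ ‖U T + W T‖ + ((⨆ k, α k) * ‖V‖) * ‖T‖ := by
        calc ‖S‖⁻¹ * ‖T‖
            ≤ ‖S‖⁻¹ * (‖S‖ * ‖U T + W T‖ + ‖S‖ * (((⨆ k, α k) * ‖V‖) * ‖T‖)) :=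
              mul_le_mul_of_nonneg_left hTle (inv_nonneg.mpr hSpos.le)
          _ = (‖S‖⁻¹ * ‖S‖) * ‖U T + W T‖
              + (‖S‖⁻¹ * ‖S‖) * (((⨆ k, α k) * ‖V‖) * ‖T‖) := by ring
          _ = ‖U T + W T‖ + ((⨆ k, α k) * ‖V‖) * ‖T‖ := by rw [h3]; ring
      have hexp : (‖S‖⁻¹ - (⨆ k, α k) * ‖V‖) * ‖T‖
          = ‖S‖⁻¹ * ‖T‖ - ((⨆ k, α k) * ‖V‖) * ‖T‖ := by ring
      rw [hexp]
      linarith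
    · -- upper bound
      calc ‖U T + W T‖ ≤ ‖U T‖ + ‖W T‖ := norm_add_le _ _
        _ ≤ ‖U‖ * ‖T‖ + ((⨆ k, α k) * ‖V‖) * ‖T‖ := add_le_add (U.le_opNorm T) (hWb T)
        _ = (‖U‖ + (⨆ k, α k) * ‖V‖) * ‖T‖ := by ring
    · -- reconstruction
      have hScT : S (U T + W T) = (e : (X →L[𝕂] 𝕂) →L[𝕂] (X →L[𝕂] 𝕂)) T := by
        rw [map_add, hSU, heval, hKapp]
      show (↑e⁻¹ : (X →L[𝕂] 𝕂) →L[𝕂] (X →L[𝕂] 𝕂)) (S (U T + W T)) = T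
      rw [hScT, hinv]
end

section
/- Assume the norm of X_d^* is solid. Let ({x_k}, S) be a retro Banach frame associated to (a₂,…,aₙ) for X_F^* with respect to X_d^*, with coefficient mapping U(T) = {T(x_k,a₂,…,aₙ)}ₖ. Let {y_k} be a sequence in X with {T(y_k,a₂,…,aₙ)}ₖ ∈ X_d^* for all T ∈ X_F^*, let R : X_d^* → X_d^* be a bounded linear operator with R({T(y_k,a₂,…,aₙ)}ₖ) = {T(x_k,a₂,…,aₙ)}ₖ for all T ∈ X_F^*, and let {α_k}, {β_k} be positively confined sequences of positive reals. Suppose there exist constants λ, μ ∈ [0,1) and γ ≥ 0 such that γ < (1−λ)·‖S‖⁻¹·(inf_k α_k) and, for all T ∈ X_F^*, ‖{α_k T(x_k,a₂,…,aₙ)}ₖ − {β_k T(y_k,a₂,…,aₙ)}ₖ‖ ≤ λ‖{α_k T(x_k,a₂,…,aₙ)}ₖ‖ + μ‖{β_k T(y_k,a₂,…,aₙ)}ₖ‖ + γ‖T‖. Then P = S∘R is a bounded linear operator such that ({y_k}, P) is a retro Banach frame associated to (a₂,…,aₙ) for X_F^* with respect to X_d^*, with bounds [(1−λ)‖S‖⁻¹(inf_k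 α_k) − γ] / [(1+μ)(sup_k β_k)] and [(1+λ)‖U‖(sup_k α_k) + γ] / [(1−μ)(inf_k β_k)]. -/
open Filter Finset

theorem statement13
    {𝕂 : Type*} [RCLike 𝕂] {X : Type*} [SeminormedAddCommGroup X] [NormedSpace 𝕂 X]
    {n : ℕ} (hn : 1 ≤ n) {N : (Fin (n + 1) → X) → ℝ} (hN : IsNNorm 𝕂 N)
    (hXBanach : IsNBanach N) {a : Fin n → X} (ha : ∀ z : X, ‖z‖ = N (Fin.cons z a))
    {D : Type*} [NormedAddCommGroup D] [NormedSpace 𝕂 D] [CompleteSpace D]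
    (j : D →ₗ[𝕂] (ℕ → 𝕂)) (hj : Function.Injective j)
    (hsolid : SolidNorm j)
    (x y : ℕ → X) (S : D →L[𝕂] (X →L[𝕂] 𝕂)) (A B : ℝ)
    (hx : RetroBanachFrame j x S A B)
    (U : (X →L[𝕂] 𝕂) →L[𝕂] D) (hU : ∀ T : X →L[𝕂] 𝕂, j (U T) = fun k => T (x k))
    (hymem : ∀ T : X →L[𝕂] 𝕂, ∃ c : D, j c = fun k => T (y k))
    (R : D →L[𝕂] D)
    (hR : ∀ (T : X →L[𝕂] 𝕂) (c : D), j c = (fun k => T (y k)) →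
      j (R c) = fun k => T (x k))
    (α β : ℕ → ℝ) (hα : PositivelyConfined α) (hβ : PositivelyConfined β)
    (lam mu gam : ℝ) (hlam0 : 0 ≤ lam) (hlam1 : lam < 1)
    (hmu0 : 0 ≤ mu) (hmu1 : mu < 1) (hgam0 : 0 ≤ gam)
    (hgam : gam < (1 - lam) * ‖S‖⁻¹ * (⨅ k, α k))
    (hpert : ∀ (T : X →L[𝕂] 𝕂) (ca cb : D),
      j ca = (fun k => (α k : 𝕂) * T (x k)) → j cb = (fun k => (β k : 𝕂) * T (y k)) →
        ‖ca - cb‖ ≤ lam * ‖ca‖ + mu * ‖cb‖ + gam * ‖T‖) :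
    RetroBanachFrame j y (S.comp R)
      (((1 - lam) * ‖S‖⁻¹ * (⨅ k, α k) - gam) / ((1 + mu) * (⨆ k, β k)))
      (((1 + lam) * ‖U‖ * (⨆ k, α k) + gam) / ((1 - mu) * (⨅ k, β k))) := by
  obtain ⟨hiα, hbαa⟩ := hα
  obtain ⟨hiβ, hbβa⟩ := hβ
  obtain ⟨hA0, hAB, hframe⟩ := hx
  have hbαb : BddBelow (Set.range α) := by
    by_contra h
    rw [Real.iInf_of_not_bddBelow h] at hiα
    exact lt_irrefl _ hiα
  have hbβb : BddBelow (Set.range β) := by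
    by_contra h
    rw [Real.iInf_of_not_bddBelow h] at hiβ
    exact lt_irrefl _ hiβ
  have hαle : ∀ k, (⨅ k, α k) ≤ α k := fun k => ciInf_le hbαb k
  have hαge : ∀ k, α k ≤ ⨆ k, α k := fun k => le_ciSup hbαa k
  have hβle : ∀ k, (⨅ k, β k) ≤ β k := fun k => ciInf_le hbβb k
  have hβge : ∀ k, β k ≤ ⨆ k, β k := fun k => le_ciSup hbβa k
  have hαpos : ∀ k, 0 < α k := fun k => lt_of_lt_of_le hiα (hαle k)
  have hβpos : ∀ k, 0 < β k := fun k => lt_of_lt_of_le hiβ (hβle k)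
  have hsα : 0 < ⨆ k, α k := lt_of_lt_of_le (hαpos 0) (hαge 0)
  have hsβ : 0 < ⨆ k, β k := lt_of_lt_of_le (hβpos 0) (hβge 0)
  have h1lam : (0:ℝ) < 1 - lam := by linarith
  have h1mu : (0:ℝ) < 1 - mu := by linarith
  have hl1 : (0:ℝ) ≤ 1 + lam := by linarith
  have hm1 : (0:ℝ) ≤ 1 + mu := by linarith
  have hfα : (fun k => ‖((α k : ℝ) : 𝕂)‖) = α := by
    funext k
    rw [RCLike.norm_ofReal, abs_of_pos (hαpos k)]
  have hfβ : (fun k => ‖((β k : ℝ) : 𝕂)‖) = β := by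
    funext k
    rw [RCLike.norm_ofReal, abs_of_pos (hβpos k)]
  have hnum : 0 < (1 - lam) * ‖S‖⁻¹ * (⨅ k, α k) := lt_of_le_of_lt hgam0 hgam
  have hSinv : 0 < ‖S‖⁻¹ := by
    rcases lt_or_ge 0 ‖S‖⁻¹ with h | h
    · exact h
    · exfalso
      have h0 : ‖S‖⁻¹ = 0 := le_antisymm h (inv_nonneg.2 (norm_nonneg S))
      rw [h0] at hnum
      nlinarith
  have hS0 : 0 < ‖S‖ := inv_pos.mp hSinv
  have hSU : ∀ T : X →L[𝕂] 𝕂, S (U T) = T := by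
    intro T
    obtain ⟨c', hjc', _, _, hSc'⟩ := hframe T
    have hc' : c' = U T := hj (by rw [hjc', hU T])
    rw [hc'] at hSc'
    exact hSc'
  have key : ∀ T : X →L[𝕂] 𝕂, ∃ c : D, j c = (fun k => T (y k)) ∧
      (((1 - lam) * ‖S‖⁻¹ * (⨅ k, α k) - gam) / ((1 + mu) * (⨆ k, β k))) * ‖T‖ ≤ ‖c‖ ∧
      ‖c‖ ≤ (((1 + lam) * ‖U‖ * (⨆ k, α k) + gam) / ((1 - mu) * (⨅ k, β k))) * ‖T‖ ∧
      (S.comp R) c = T := by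
    intro T
    obtain ⟨c, hjc⟩ := hymem T
    obtain ⟨ca, hjca, hca1, hca2⟩ := hsolid (fun k => ((α k : ℝ) : 𝕂)) (U T)
      (by rw [show (⨅ k, ‖((α k : ℝ) : 𝕂)‖) = ⨅ k, α k from congrArg iInf hfα]; exact hiα)
      (by rw [show (Set.range fun k => ‖((α k : ℝ) : 𝕂)‖) = Set.range α from
        congrArg Set.range hfα]; exact hbαa)
    obtain ⟨cb, hjcb, hcb1, hcb2⟩ := hsolid (fun k => ((β k : ℝ) : 𝕂)) c
      (by rw [show (⨅ k, ‖((β k : ℝ) : 𝕂)‖) = ⨅ k, β k from congrArg iInf hfβ]; exact hiβ)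
      (by rw [show (Set.range fun k => ‖((β k : ℝ) : 𝕂)‖) = Set.range β from
        congrArg Set.range hfβ]; exact hbβa)
    rw [show (⨅ k, ‖((α k : ℝ) : 𝕂)‖) = ⨅ k, α k from congrArg iInf hfα] at hca1
    rw [show (⨆ k, ‖((α k : ℝ) : 𝕂)‖) = ⨆ k, α k from congrArg iSup hfα] at hca2
    rw [show (⨅ k, ‖((β k : ℝ) : 𝕂)‖) = ⨅ k, β k from congrArg iInf hfβ] at hcb1
    rw [show (⨆ k, ‖((β k : ℝ) : 𝕂)‖) = ⨆ k, β k from congrArg iSup hfβ] at hcb2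
    have hjca' : j ca = fun k => (α k : 𝕂) * T (x k) := by
      funext k
      rw [congrFun hjca k, congrFun (hU T) k]
    have hjcb' : j cb = fun k => (β k : 𝕂) * T (y k) := by
      funext k
      rw [congrFun hjcb k, congrFun hjc k]
    have hpert' := hpert T ca cb hjca' hjcb'
    have htr1 : ‖cb‖ - ‖ca‖ ≤ ‖ca - cb‖ := by
      rw [norm_sub_rev]
      exact norm_sub_norm_le cb ca
    have htr2 : ‖ca‖ - ‖cb‖ ≤ ‖ca - cb‖ := norm_sub_norm_le ca cb
    have hub : (1 - mu) * ‖cb‖ ≤ (1 + lam) * ‖ca‖ + gam * ‖T‖ := by linarith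
    have hlb : (1 - lam) * ‖ca‖ ≤ (1 + mu) * ‖cb‖ + gam * ‖T‖ := by linarith
    have hca2' : ‖ca‖ ≤ (⨆ k, α k) * (‖U‖ * ‖T‖) :=
      hca2.trans (mul_le_mul_of_nonneg_left (U.le_opNorm T) hsα.le)
    have hT_le : ‖T‖ ≤ ‖S‖ * ‖U T‖ := by
      calc ‖T‖ = ‖S (U T)‖ := by rw [hSU T]
        _ ≤ ‖S‖ * ‖U T‖ := S.le_opNorm _
    have hUT_low : ‖S‖⁻¹ * ‖T‖ ≤ ‖U T‖ := by
      have h := mul_le_mul_of_nonneg_left hT_le hSinv.le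
      rwa [← mul_assoc, inv_mul_cancel₀ hS0.ne', one_mul] at h
    have hca1' : (⨅ k, α k) * (‖S‖⁻¹ * ‖T‖) ≤ ‖ca‖ :=
      le_trans (mul_le_mul_of_nonneg_left hUT_low hiα.le) hca1
    have hRc : (S.comp R) c = T := by
      have hrc : R c = U T := hj (by rw [hR T c hjc, hU T])
      rw [ContinuousLinearMap.comp_apply, hrc, hSU T]
    refine ⟨c, hjc, ?_, ?_, hRc⟩
    · rw [div_mul_eq_mul_div, div_le_iff₀ (mul_pos (by linarith) hsβ)]
      have p1 := mul_le_mul_of_nonneg_left hca1' h1lam.le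
      have p2 := mul_le_mul_of_nonneg_left hcb2 hm1
      linarith [p1, p2, hlb]
    · rw [div_mul_eq_mul_div, le_div_iff₀ (mul_pos h1mu hiβ)]
      have p1 := mul_le_mul_of_nonneg_left hcb1 h1mu.le
      have p2 := mul_le_mul_of_nonneg_left hca2' hl1
      linarith [p1, p2, hub]
  refine ⟨?_, ?_, key⟩
  · exact div_pos (sub_pos.2 hgam) (mul_pos (by linarith) hsβ)
  · obtain ⟨d, hd⟩ : ∃ d, 0 < ‖S d‖ := by
      by_contra h
      push_neg at h
      have hb : ‖S‖ ≤ 0 := S.opNorm_le_bound le_rfl (fun z => by simpa using h z)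
      linarith
    obtain ⟨c, _, hA', hB', _⟩ := key (S d)
    exact le_of_mul_le_mul_right (hA'.trans hB') hd
end

section
/- Let {x_k} be a retro Banach Bessel sequence associated to (a₂,…,aₙ) for X_F^* with respect to X_d^* with bound B, and let {y_k} be a sequence in X with {T(y_k,a₂,…,aₙ)}ₖ ∈ X_d^* for all T ∈ X_F^*. Suppose there exist non-negative constants α, γ and β with 0 ≤ β < 1 such that for all T ∈ X_F^*, ‖{T(x_k − y_k,a₂,…,aₙ)}ₖ‖ ≤ α‖{T(x_k,a₂,…,aₙ)}ₖ‖ + β‖{T(y_k,a₂,…,aₙ)}ₖ‖ + γ‖T‖. Then {y_k} is a retro Banach Bessel sequence associated to (a₂,…,aₙ) for X_F^* with respect to X_d^* with bound [(1+α)B + γ]/(1−β). -/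
open Filter Finset

theorem statement14
    {𝕂 : Type*} [RCLike 𝕂] {X : Type*} [SeminormedAddCommGroup X] [NormedSpace 𝕂 X]
    {n : ℕ} (hn : 1 ≤ n) {N : (Fin (n + 1) → X) → ℝ} (hN : IsNNorm 𝕂 N)
    (hXBanach : IsNBanach N) {a : Fin n → X} (ha : ∀ z : X, ‖z‖ = N (Fin.cons z a))
    {D : Type*} [NormedAddCommGroup D] [NormedSpace 𝕂 D] [CompleteSpace D]
    (j : D →ₗ[𝕂] (ℕ → 𝕂)) (hj : Function.Injective j)
    (x y : ℕ → X) (B : ℝ)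
    (hx : RetroBesselSeq j x B)
    (hy : ∀ T : X →L[𝕂] 𝕂, ∃ c : D, j c = fun k => T (y k))
    (α β γ : ℝ) (hα : 0 ≤ α) (hβ0 : 0 ≤ β) (hβ1 : β < 1) (hγ : 0 ≤ γ)
    (hpert : ∀ (T : X →L[𝕂] 𝕂) (cx cy : D),
      j cx = (fun k => T (x k)) → j cy = (fun k => T (y k)) →
        ‖cx - cy‖ ≤ α * ‖cx‖ + β * ‖cy‖ + γ * ‖T‖) :
    RetroBesselSeq j y (((1 + α) * B + γ) / (1 - β)) := by
  obtain ⟨hB, hxB⟩ := hx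
  have h1β : 0 < 1 - β := by linarith
  constructor
  · positivity
  intro T
  obtain ⟨cx, hcx, hcxB⟩ := hxB T
  obtain ⟨cy, hcy⟩ := hy T
  refine ⟨cy, hcy, ?_⟩
  have hd := hpert T cx cy hcx hcy
  have h2 : ‖cy‖ ≤ ‖cx‖ + ‖cx - cy‖ := by
    simpa [norm_sub_rev] using norm_le_insert' cy cx
  have hT : 0 ≤ ‖T‖ := norm_nonneg _
  have : (1 - β) * ‖cy‖ ≤ ((1 + α) * B + γ) * ‖T‖ := by nlinarith [norm_nonneg cx]
  rw [div_mul_eq_mul_div, le_div_iff₀ h1β, mul_comm ‖cy‖]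
  exact this
end

section
/- For i ∈ {1,…,m}, let ({x_{k,i}}, S_i) be retro Banach frames associated to (a₂,…,aₙ) for X_F^* with respect to X_d^*. Suppose there exists j ∈ {1,…,m} such that ‖{T(x_{k,j},a₂,…,aₙ)}ₖ‖ ≤ ‖{T(Σ_{i=1}^m x_{k,i},a₂,…,aₙ)}ₖ‖ for all T ∈ X_F^*. Then the sequence {Σ_{i=1}^m x_{k,i}} is total over X_F^*, and there exist a Banach space of scalar sequences X_{d₁} = { {T(Σ_{i=1}^m x_{k,i},a₂,…,aₙ)}ₖ : T ∈ X_F^* } with norm ‖{T(Σ_{i=1}^m x_{k,i},a₂,…,aₙ)}ₖ‖ := ‖T‖ and a bounded linear operator P : X_{d₁} → X_F^* such that ({Σ_{i=1}^m x_{k,i}}, P) is a normalized tight retro Banach frame associated to (a₂,…,aₙ) for X_F^* with respect to X_{d₁}. -/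
open Filter Finset

set_option maxHeartbeats 1000000 in
set_option synthInstance.maxHeartbeats 200000 in
theorem statement15
    {𝕂 : Type*} [RCLike 𝕂] {X : Type*} [SeminormedAddCommGroup X] [NormedSpace 𝕂 X]
    {n : ℕ} (hn : 1 ≤ n) {N : (Fin (n + 1) → X) → ℝ} (hN : IsNNorm 𝕂 N)
    (hXBanach : IsNBanach N) {a : Fin n → X} (ha : ∀ z : X, ‖z‖ = N (Fin.cons z a))
    {D : Type*} [NormedAddCommGroup D] [NormedSpace 𝕂 D] [CompleteSpace D]
    (j : D →ₗ[𝕂] (ℕ → 𝕂)) (hj : Function.Injective j)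
    (m : ℕ) (x : Fin m → ℕ → X) (S : Fin m → D →L[𝕂] (X →L[𝕂] 𝕂)) (A B : Fin m → ℝ)
    (hx : ∀ i, RetroBanachFrame j (x i) (S i) (A i) (B i)) (j₀ : Fin m)
    (hdom : ∀ (T : X →L[𝕂] 𝕂) (cj cs : D), j cj = (fun k => T (x j₀ k)) →
      j cs = (fun k => T (∑ i, x i k)) → ‖cj‖ ≤ ‖cs‖) :
    TotalOver 𝕂 (fun k => ∑ i, x i k) ∧
    ∃ (W : Submodule 𝕂 (ℕ → 𝕂)) (nw : W → ℝ) (P : W →ₗ[𝕂] (X →L[𝕂] 𝕂)),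
      (W : Set (ℕ → 𝕂)) = Set.range (fun T : X →L[𝕂] 𝕂 => fun k => T (∑ i, x i k)) ∧
      (∀ T : X →L[𝕂] 𝕂, (fun k => T (∑ i, x i k)) ∈ W) ∧
      (∀ (T : X →L[𝕂] 𝕂) (h : (fun k => T (∑ i, x i k)) ∈ W), nw ⟨fun k => T (∑ i, x i k), h⟩ = ‖T‖) ∧
      (∀ c : W, 0 ≤ nw c) ∧
      (∀ c : W, nw c = 0 ↔ c = 0) ∧
      (∀ c d : W, nw (c + d) ≤ nw c + nw d) ∧
      (∀ (γ : 𝕂) (c : W), nw (γ • c) = ‖γ‖ * nw c) ∧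
      (∀ u : ℕ → W,
        (∀ ε : ℝ, 0 < ε → ∃ n₀ : ℕ, ∀ p q : ℕ, n₀ ≤ p → n₀ ≤ q → nw (u p - u q) < ε) →
        ∃ c : W, Tendsto (fun k => nw (u k - c)) atTop (nhds 0)) ∧
      (∃ Cb : ℝ, 0 ≤ Cb ∧ ∀ c : W, ‖P c‖ ≤ Cb * nw c) ∧
      (∀ (T : X →L[𝕂] 𝕂) (h : (fun k => T (∑ i, x i k)) ∈ W), P ⟨fun k => T (∑ i, x i k), h⟩ = T) := by
  classical
  have total : TotalOver 𝕂 (fun k => ∑ i, x i k) := by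
    intro T hT
    obtain ⟨hA, hAB, hframe⟩ := hx j₀
    obtain ⟨cj, hcj, hle, _, _⟩ := hframe T
    have hcs : j (0 : D) = (fun k => T (∑ i, x i k)) := by
      funext k; simp [hT k]
    have h0 : ‖cj‖ ≤ ‖(0 : D)‖ := hdom T cj 0 hcj hcs
    simp only [norm_zero] at h0
    have hT0 : ‖T‖ ≤ 0 := by nlinarith [norm_nonneg cj]
    ext z
    have h1 : ‖T z‖ ≤ ‖T‖ * ‖z‖ := T.le_opNorm z
    have h2 : ‖T z‖ ≤ 0 := le_trans h1 (by nlinarith [norm_nonneg z])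
    simpa using le_antisymm h2 (norm_nonneg _)
  refine ⟨total, ?_⟩
  set Φ : (X →L[𝕂] 𝕂) →ₗ[𝕂] (ℕ → 𝕂) :=
    { toFun := fun T k => T (∑ i, x i k)
      map_add' := by intro T U; funext k; simp [Finset.sum_add_distrib]
      map_smul' := by intro c T; funext k; simp [Finset.mul_sum] } with hΦ
  have hΦapp : ∀ T : X →L[𝕂] 𝕂, Φ T = fun k => T (∑ i, x i k) := fun T => rfl
  have hinj : Function.Injective Φ := by
    intro T U h
    have h' : T - U = 0 := by
      apply total
      intro k
      have h2 : T (∑ i, x i k) = U (∑ i, x i k) := congrFun h k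
      simp only [ContinuousLinearMap.sub_apply, h2, sub_self]
    exact sub_eq_zero.mp h'
  set e := LinearEquiv.ofInjective Φ hinj with he
  have hmem : ∀ T : X →L[𝕂] 𝕂, (fun k => T (∑ i, x i k)) ∈ LinearMap.range Φ :=
    fun T => ⟨T, rfl⟩
  have hsub : ∀ (T : X →L[𝕂] 𝕂) (h : (fun k => T (∑ i, x i k)) ∈ LinearMap.range Φ),
      (⟨fun k => T (∑ i, x i k), h⟩ : LinearMap.range Φ) = e T := by
    intro T h
    apply Subtype.ext
    simp [he, hΦapp]
  refine ⟨LinearMap.range Φ, fun c => ‖e.symm c‖, e.symm.toLinearMap,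
    ?_, hmem, ?_, ?_, ?_, ?_, ?_, ?_, ?_, ?_⟩
  · exact LinearMap.coe_range Φ
  · intro T h
    show ‖e.symm (⟨fun k => T (∑ i, x i k), h⟩ : LinearMap.range Φ)‖ = ‖T‖
    rw [hsub T h, LinearEquiv.symm_apply_apply]
  · intro c; exact norm_nonneg _
  · intro c
    show ‖e.symm c‖ = 0 ↔ c = 0
    constructor
    · intro h0
      have hc0 : e.symm c = 0 := by
        ext z
        have h1 : ‖(e.symm c) z‖ ≤ ‖e.symm c‖ * ‖z‖ := (e.symm c).le_opNorm z
        rw [h0, zero_mul] at h1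
        have h2 : (e.symm c) z = 0 := norm_le_zero_iff.mp h1
        simpa using h2
      have h3 := congrArg e hc0
      rwa [LinearEquiv.apply_symm_apply, map_zero] at h3
    · intro h; rw [h, map_zero, norm_zero]
  · intro c d
    show ‖e.symm (c + d)‖ ≤ ‖e.symm c‖ + ‖e.symm d‖
    rw [map_add]; exact norm_add_le _ _
  · intro γ c
    show ‖e.symm (γ • c)‖ = ‖γ‖ * ‖e.symm c‖
    have hsm : e.symm (γ • c) = γ • e.symm c := map_smul e.symm γ c
    rw [hsm]
    exact norm_smul γ (e.symm c)
  · intro u hu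
    have hcauchy : CauchySeq (fun k => e.symm (u k)) := by
      rw [Metric.cauchySeq_iff]
      intro ε hε
      obtain ⟨n₀, hn₀⟩ := hu ε hε
      refine ⟨n₀, fun p hp q hq => ?_⟩
      rw [dist_eq_norm, ← map_sub]
      exact hn₀ p q hp hq
    obtain ⟨Tlim, hTlim⟩ := cauchySeq_tendsto_of_complete hcauchy
    refine ⟨e Tlim, ?_⟩
    have h4 : Tendsto (fun k => ‖e.symm (u k) - Tlim‖) atTop (nhds 0) :=
      (tendsto_iff_norm_sub_tendsto_zero).mp hTlim
    have h5 : (fun k => ‖e.symm (u k - e Tlim)‖) = fun k => ‖e.symm (u k) - Tlim‖ := by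
      funext k
      rw [map_sub, LinearEquiv.symm_apply_apply]
    show Tendsto (fun k => ‖e.symm (u k - e Tlim)‖) atTop (nhds 0)
    rw [h5]; exact h4
  · refine ⟨1, zero_le_one, fun c => ?_⟩
    show ‖e.symm c‖ ≤ 1 * ‖e.symm c‖
    rw [one_mul]
  · intro T h
    show e.symm (⟨fun k => T (∑ i, x i k), h⟩ : LinearMap.range Φ) = T
    rw [hsub T h, LinearEquiv.symm_apply_apply]
end

section
/- For i ∈ E_m = {1,…,m}, let ({x_{k,i}}, S_i) be retro Banach frames associated to (a₂,…,aₙ) for X_F^* with respect to X_d^*, with coefficient mappings U_i(T) = {T(x_{k,i},a₂,…,aₙ)}ₖ. Let {y_{k,i}} be sequences in X with {T(y_{k,i},a₂,…,aₙ)}ₖ ∈ X_d^* for all T ∈ X_F^* and all i, and let R : X_d^* → X_d^* be a bounded linear operator such that, for some fixed p ∈ E_m, R({T(Σ_{i=1}^m y_{k,i},a₂,…,aₙ)}ₖ) = {T(x_{k,p},a₂,…,aₙ)}ₖ for all T ∈ X_F^*. Suppose there exist constants α, β > 0 and some j ∈ E_m such that α·Σ_{i∈E_m}‖U_i‖ +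 mβ < ‖S_j‖⁻¹ − Σ_{i∈E_m, i≠j}‖U_i‖, and ‖{T(x_{k,i} − y_{k,i},a₂,…,aₙ)}ₖ‖ ≤ α‖{T(x_{k,i},a₂,…,aₙ)}ₖ‖ + β‖T‖ for all T ∈ X_F^* and all i ∈ E_m. Then P = S_p∘R is a bounded linear operator such that ({Σ_{i∈E_m} y_{k,i}}, P) is a retro Banach frame associated to (a₂,…,aₙ) for X_F^* with respect to X_d^*, with bounds ‖S_j‖⁻¹ − [α·Σ_{i∈E_m}‖U_i‖ + Σ_{i∈E_m, i≠j}‖U_i‖ + mβ] and (1+α)·Σ_{i∈E_m}‖U_i‖ + mβ. -/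
open Filter Finset

set_option maxHeartbeats 1000000 in
theorem statement16
    {𝕂 : Type*} [RCLike 𝕂] {X : Type*} [SeminormedAddCommGroup X] [NormedSpace 𝕂 X]
    {n : ℕ} (hn : 1 ≤ n) {N : (Fin (n + 1) → X) → ℝ} (hN : IsNNorm 𝕂 N)
    (hXBanach : IsNBanach N) {a : Fin n → X} (ha : ∀ z : X, ‖z‖ = N (Fin.cons z a))
    {D : Type*} [NormedAddCommGroup D] [NormedSpace 𝕂 D] [CompleteSpace D]
    (j : D →ₗ[𝕂] (ℕ → 𝕂)) (hj : Function.Injective j)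
    (m : ℕ) (x : Fin m → ℕ → X) (S : Fin m → D →L[𝕂] (X →L[𝕂] 𝕂)) (A B : Fin m → ℝ)
    (hx : ∀ i, RetroBanachFrame j (x i) (S i) (A i) (B i))
    (U : Fin m → (X →L[𝕂] 𝕂) →L[𝕂] D)
    (hU : ∀ (i : Fin m) (T : X →L[𝕂] 𝕂), j (U i T) = fun k => T (x i k))
    (y : Fin m → ℕ → X)
    (hy : ∀ (i : Fin m) (T : X →L[𝕂] 𝕂), ∃ c : D, j c = fun k => T (y i k))
    (p : Fin m) (R : D →L[𝕂] D)
    (hR : ∀ (T : X →L[𝕂] 𝕂) (c : D), j c = (fun k => T (∑ i, y i k)) →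
      j (R c) = fun k => T (x p k))
    (α β : ℝ) (hα : 0 < α) (hβ : 0 < β) (j₀ : Fin m)
    (hmain : α * ∑ i, ‖U i‖ + m * β < ‖S j₀‖⁻¹ - ∑ i ∈ Finset.univ.erase j₀, ‖U i‖)
    (hpert : ∀ (i : Fin m) (T : X →L[𝕂] 𝕂) (ci di : D),
      j ci = (fun k => T (x i k)) → j di = (fun k => T (y i k)) →
        ‖ci - di‖ ≤ α * ‖ci‖ + β * ‖T‖) :
    RetroBanachFrame j (fun k => ∑ i, y i k) ((S p).comp R)
      (‖S j₀‖⁻¹ - (α * ∑ i, ‖U i‖ + (∑ i ∈ Finset.univ.erase j₀, ‖U i‖) + m * β))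
      ((1 + α) * ∑ i, ‖U i‖ + m * β) := by

  classical
  have hm : 0 < m := j₀.pos
  set SU : ℝ := ∑ i, ‖U i‖ with hSU
  set E : ℝ := ∑ i ∈ Finset.univ.erase j₀, ‖U i‖ with hE
  have hSUnn : 0 ≤ SU := Finset.sum_nonneg fun i _ => norm_nonneg (U i)
  have hEnn : 0 ≤ E := Finset.sum_nonneg fun i _ => norm_nonneg (U i)
  have hmβ : 0 < (m : ℝ) * β := by positivity
  have hinvpos : 0 < ‖S j₀‖⁻¹ := by nlinarith [mul_nonneg hα.le hSUnn]
  have hSpos : 0 < ‖S j₀‖ := inv_pos.mp hinvpos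
  have hUeq : ∀ (i : Fin m) (T : X →L[𝕂] 𝕂) (c : D),
      j c = (fun k => T (x i k)) → c = U i T := fun i T c hc => hj (by rw [hc, hU])
  have hST : ∀ (i : Fin m) (T : X →L[𝕂] 𝕂), S i (U i T) = T := by
    intro i T
    obtain ⟨c, hc1, _, _, hc4⟩ := (hx i).2.2 T
    rw [← hUeq i T c hc1]; exact hc4
  have hlow : ∀ T : X →L[𝕂] 𝕂, ‖S j₀‖⁻¹ * ‖T‖ ≤ ‖U j₀ T‖ := by
    intro T
    rw [inv_mul_le_iff₀ hSpos]
    calc ‖T‖ = ‖S j₀ (U j₀ T)‖ := by rw [hST]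
      _ ≤ ‖S j₀‖ * ‖U j₀ T‖ := (S j₀).le_opNorm _
  have hEsum : E + ‖U j₀‖ = SU := Finset.sum_erase_add _ _ (Finset.mem_univ j₀)
  have hcard : ((Finset.univ.erase j₀).card : ℝ) = (m : ℝ) - 1 := by
    rw [Finset.card_erase_of_mem (Finset.mem_univ j₀)]
    simp only [Finset.card_univ, Fintype.card_fin]
    rw [Nat.cast_sub hm]; simp
  have hI : ‖S j₀‖⁻¹ ≤ ‖U j₀‖ := by
    by_cases hT : ∀ T : X →L[𝕂] 𝕂, ‖T‖ = 0
    · exfalso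
      have h0 : ‖S j₀‖ ≤ 0 :=
        (S j₀).opNorm_le_bound le_rfl (fun c => by simp [hT (S j₀ c)])
      linarith
    · push_neg at hT
      obtain ⟨T, hT⟩ := hT
      have hTpos : 0 < ‖T‖ := lt_of_le_of_ne (norm_nonneg T) (Ne.symm hT)
      exact le_of_mul_le_mul_right ((hlow T).trans ((U j₀).le_opNorm T)) hTpos
  have hUj₀ : ‖U j₀‖ ≤ SU :=
    Finset.single_le_sum (fun i _ => norm_nonneg (U i)) (Finset.mem_univ j₀)
  refine ⟨by nlinarith [mul_nonneg hα.le hSUnn], by nlinarith [mul_nonneg hα.le hSUnn], fun T => ?_⟩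
  choose d hd using fun i => hy i T
  have hc : j (∑ i, d i) = fun k => T (∑ i, y i k) := by
    funext k
    rw [map_sum]
    simp only [Finset.sum_apply, map_sum]
    exact Finset.sum_congr rfl fun i _ => by rw [hd i]
  have hrec : (S p).comp R (∑ i, d i) = T := by
    have h1 : j (R (∑ i, d i)) = fun k => T (x p k) := hR T _ hc
    have h2 : R (∑ i, d i) = U p T := hUeq p T _ h1
    rw [ContinuousLinearMap.comp_apply, h2, hST p T]
  have hpert' : ∀ i, ‖U i T - d i‖ ≤ α * ‖U i T‖ + β * ‖T‖ :=
    fun i => hpert i T (U i T) (d i) (hU i T) (hd i)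
  have hu : ∀ i, ‖U i T‖ ≤ ‖U i‖ * ‖T‖ := fun i => (U i).le_opNorm T
  have hw : ∀ i, ‖d i‖ ≤ (1 + α) * (‖U i‖ * ‖T‖) + β * ‖T‖ := by
    intro i
    have h1 : ‖d i‖ - ‖U i T‖ ≤ ‖d i - U i T‖ := norm_sub_norm_le _ _
    rw [norm_sub_rev] at h1
    have h2 := hpert' i
    have h3 := hu i
    nlinarith [norm_nonneg T]
  have hsum : ∀ s : Finset (Fin m), ∑ i ∈ s, ‖d i‖ ≤
      ((1 + α) * (∑ i ∈ s, ‖U i‖) + s.card * β) * ‖T‖ := by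
    intro s
    calc ∑ i ∈ s, ‖d i‖ ≤ ∑ i ∈ s, ((1 + α) * (‖U i‖ * ‖T‖) + β * ‖T‖) :=
          Finset.sum_le_sum fun i _ => hw i
      _ = ((1 + α) * (∑ i ∈ s, ‖U i‖) + s.card * β) * ‖T‖ := by
          rw [Finset.sum_add_distrib, ← Finset.mul_sum, ← Finset.sum_mul,
            Finset.sum_const, nsmul_eq_mul]
          ring
  have hupper : ‖∑ i, d i‖ ≤ ((1 + α) * SU + m * β) * ‖T‖ := by
    calc ‖∑ i, d i‖ ≤ ∑ i, ‖d i‖ := norm_sum_le _ _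
      _ ≤ ((1 + α) * SU + m * β) * ‖T‖ := by
          have := hsum Finset.univ
          simpa [Finset.card_univ] using this
  have hlower : (‖S j₀‖⁻¹ - (α * SU + E + m * β)) * ‖T‖ ≤ ‖∑ i, d i‖ := by
    have h4 := hlow T
    have h2 : ‖U j₀ T‖ ≤ α * ‖U j₀ T‖ + β * ‖T‖ + ‖d j₀‖ := by
      have h' : ‖U j₀ T‖ - ‖d j₀‖ ≤ ‖U j₀ T - d j₀‖ := norm_sub_norm_le _ _
      have := hpert' j₀
      linarith
    have hdj : ‖d j₀‖ ≤ ‖∑ i, d i‖ + ∑ i ∈ Finset.univ.erase j₀, ‖d i‖ := by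
      have h1 : d j₀ = (∑ i, d i) - ∑ i ∈ Finset.univ.erase j₀, d i := by
        rw [eq_sub_iff_add_eq, add_comm]
        exact Finset.sum_erase_add _ _ (Finset.mem_univ j₀)
      calc ‖d j₀‖ = ‖(∑ i, d i) - ∑ i ∈ Finset.univ.erase j₀, d i‖ := by rw [← h1]
        _ ≤ ‖∑ i, d i‖ + ‖∑ i ∈ Finset.univ.erase j₀, d i‖ := norm_sub_le _ _
        _ ≤ ‖∑ i, d i‖ + ∑ i ∈ Finset.univ.erase j₀, ‖d i‖ := by
            gcongr; exact norm_sum_le _ _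
    have hEs := hsum (Finset.univ.erase j₀)
    rw [hcard, ← hE] at hEs
    have huj := hu j₀
    have haT : α * ‖U j₀ T‖ ≤ α * (‖U j₀‖ * ‖T‖) := by nlinarith
    have heq1 : E * ‖T‖ + ‖U j₀‖ * ‖T‖ = SU * ‖T‖ := by rw [← hEsum]; ring
    have heq2 : α * (E * ‖T‖) + α * (‖U j₀‖ * ‖T‖) = α * (SU * ‖T‖) := by
      rw [← hEsum]; ring
    nlinarith [norm_nonneg T, norm_nonneg (∑ i, d i)]
  exact ⟨∑ i, d i, hc, hlower, hupper, hrec⟩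
end
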